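/- Let L₁ and L₂ be distinct line segments in ℝ² of equal positive length that intersect at their common midpoint, and let (σ_N) be a sequence of positive reals with liminf_N σ_N > 0. Then no sequence of measurable estimators achieves almost exact recovery: for every sequence of measurable maps ẑ_N : (ℝ²)^N → {1,2}^N there exists ε > 0 such that, when (z, X) is sampled from GLMM_N(L₁, L₂, σ_N), the probabilities P(Ham*(ẑ_N(X), z)/N ≥ ε) do not converge to 0. -/

import Mathlib

open MeasureTheory ProbabilityTheory Filter Set
open scoped Real ENNReal
set_option maxHeartbeats 1000000
noncomputable section
variable {ι : Type*} [Fintype ι] [DecidableEq ι] {α : ι → Type*} [∀ i, MeasurableSpace (α i)]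

lemma pi_update_add (μ : ∀ i, Measure (α i)) [∀ i, IsFiniteMeasure (μ i)]
    (i : ι) (κ₁ κ₂ : Measure (α i)) [IsFiniteMeasure κ₁] [IsFiniteMeasure κ₂] :
    Measure.pi (Function.update μ i (κ₁ + κ₂)) =
      Measure.pi (Function.update μ i κ₁) + Measure.pi (Function.update μ i κ₂) := by
  haveI h1 : ∀ (κ : Measure (α i)) [IsFiniteMeasure κ],
      ∀ k, SigmaFinite ((Function.update μ i κ) k) := by
    intro κ hκ k
    by_cases hk : k = i
    · subst hk; rw [Function.update_self]; infer_instance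
    · rw [Function.update_of_ne hk]; infer_instance
  haveI := h1 (κ₁ + κ₂); haveI := h1 κ₁; haveI := h1 κ₂
  refine Measure.pi_eq (fun s hs => ?_)
  have key : ∀ (κ : Measure (α i)),
      (∏ k, (Function.update μ i κ) k (s k)) = (Function.update (fun k => μ k (s k)) i (κ (s i))) i *
        ∏ k ∈ Finset.univ.erase i, (fun k => μ k (s k)) k := by
    intro κ
    have : (fun k => (Function.update μ i κ) k (s k)) =
        Function.update (fun k => μ k (s k)) i (κ (s i)) := by
      funext k
      by_cases hk : k = i
      · subst hk; simp
      · simp [Function.update_of_ne hk]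
    rw [this, ← Finset.mul_prod_erase _ _ (Finset.mem_univ i)]
    congr 1
    exact Finset.prod_congr rfl (fun k hk => by
      simp [Function.update_of_ne (Finset.ne_of_mem_erase hk)])
  simp only [Measure.add_apply, Measure.pi_pi]
  rw [key (κ₁ + κ₂), key κ₁, key κ₂]
  simp [add_mul]

lemma pi_update_le (μ : ∀ i, Measure (α i)) [∀ i, IsFiniteMeasure (μ i)]
    (i : ι) (κ : Measure (α i)) (hκ : κ ≤ μ i) :
    Measure.pi (Function.update μ i κ) ≤ Measure.pi μ := by
  haveI : IsFiniteMeasure κ := isFiniteMeasure_of_le (μ i) hκ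
  have : μ = Function.update μ i (κ + (μ i - κ)) := by
    funext k
    by_cases hk : k = i
    · subst hk
      rw [Function.update_self, add_comm κ (μ k - κ), Measure.sub_add_cancel_of_le hκ]
    · rw [Function.update_of_ne hk]
  conv_rhs => rw [this]
  rw [pi_update_add]
  exact Measure.le_add_right le_rfl

abbrev E2 := EuclideanSpace ℝ (Fin 2)

def stdGaussian2 : Measure E2 :=
  Measure.map (MeasurableEquiv.toLp 2 (Fin 2 → ℝ))
    (Measure.pi fun _ : Fin 2 => gaussianReal 0 1)

def gc (R : ℝ) : ℝ≥0∞ := ENNReal.ofReal ((Real.sqrt (2 * π))⁻¹ * Real.exp (-(R ^ 2) / 2))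

lemma gc_pos (R : ℝ) : 0 < gc R := by
  apply ENNReal.ofReal_pos.2
  positivity

lemma gauss_ge (R : ℝ) :
    (gc R) • (volume.restrict (Icc (-R) R)) ≤ gaussianReal 0 1 := by
  rw [gaussianReal_of_var_ne_zero _ one_ne_zero]
  refine Measure.le_iff.2 (fun s hs => ?_)
  rw [withDensity_apply _ hs]
  calc (gc R • volume.restrict (Icc (-R) R)) s
      = gc R * volume (s ∩ Icc (-R) R) := by
        rw [Measure.smul_apply, Measure.restrict_apply hs]; rfl
    _ = ∫⁻ x in s ∩ Icc (-R) R, gc R := by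
        rw [setLIntegral_const, mul_comm]
    _ ≤ ∫⁻ x in s ∩ Icc (-R) R, gaussianPDF 0 1 x := by
        refine setLIntegral_mono (measurable_gaussianPDF 0 1) (fun x hx => ?_)
        unfold gc gaussianPDF gaussianPDFReal
        refine ENNReal.ofReal_le_ofReal ?_
        have hx' : x ^ 2 ≤ R ^ 2 := by
          have h1 := hx.2.1; have h2 := hx.2.2
          nlinarith [abs_nonneg x, sq_abs x, abs_le.2 ⟨h1, h2⟩]
        simp only [NNReal.coe_one, mul_one, sub_zero]
        apply mul_le_mul_of_nonneg_left _ (by positivity)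
        apply Real.exp_le_exp.2
        linarith
    _ ≤ ∫⁻ x in s, gaussianPDF 0 1 x :=
        lintegral_mono' (Measure.restrict_mono Set.inter_subset_left le_rfl) le_rfl


lemma isFinite_gcsmul (R : ℝ) : IsFiniteMeasure (gc R • (volume.restrict (Icc (-R) R))) := by
  constructor
  rw [Measure.smul_apply, Measure.restrict_apply MeasurableSet.univ, Set.univ_inter]
  exact ENNReal.mul_lt_top ENNReal.ofReal_lt_top (by simp)

lemma pi_gcsmul (R : ℝ) :
    Measure.pi (fun _ : Fin 2 => gc R • (volume.restrict (Icc (-R) R))) =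
      (gc R * gc R) • ((Measure.pi fun _ : Fin 2 => (volume : Measure ℝ)).restrict
        (Set.pi univ fun _ => Icc (-R) R)) := by
  haveI := isFinite_gcsmul R
  refine Measure.pi_eq (fun s hs => ?_)
  rw [Measure.smul_apply, Measure.restrict_apply (MeasurableSet.univ_pi hs),
    ← Set.pi_inter_distrib, Measure.pi_pi]
  simp only [Measure.smul_apply, Measure.restrict_apply (hs _), smul_eq_mul]
  rw [Fin.prod_univ_two, Fin.prod_univ_two]
  ring

lemma pi_gauss_ge_pi_gcsmul (R : ℝ) :
    Measure.pi (fun _ : Fin 2 => gc R • (volume.restrict (Icc (-R) R))) ≤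
      Measure.pi (fun _ : Fin 2 => gaussianReal 0 1) := by
  haveI := isFinite_gcsmul R
  set κ : Measure ℝ := gc R • (volume.restrict (Icc (-R) R)) with hκdef
  set γ : Measure ℝ := gaussianReal 0 1 with hγdef
  have hfam : (fun _ : Fin 2 => κ) =
      Function.update (Function.update (fun _ : Fin 2 => γ) 0 κ) 1 κ := by
    funext k
    fin_cases k <;> simp [Function.update]
  rw [hfam]
  haveI : ∀ k : Fin 2, IsFiniteMeasure ((Function.update (fun _ : Fin 2 => γ) 0 κ) k) := by
    intro k
    by_cases hk : k = 0
    · subst hk; rw [Function.update_self]; infer_instance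
    · rw [Function.update_of_ne hk]; infer_instance
  refine le_trans (pi_update_le (Function.update (fun _ : Fin 2 => γ) 0 κ) (1 : Fin 2) κ ?_)
    (pi_update_le (fun _ : Fin 2 => γ) (0 : Fin 2) κ ?_)
  · rw [Function.update_of_ne (by decide)]
    exact gauss_ge R
  · exact gauss_ge R

lemma stdGaussian2_ge {R : ℝ} {T : Set E2} (hT : MeasurableSet T)
    (hTR : T ⊆ Metric.closedBall 0 R) :
    (gc R * gc R) * volume T ≤ stdGaussian2 T := by
  set e := (MeasurableEquiv.toLp 2 (Fin 2 → ℝ)).symm with he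
  have hmap : stdGaussian2 T = (Measure.pi fun _ : Fin 2 => gaussianReal 0 1) (e.symm ⁻¹' T) :=
    Measure.map_apply e.symm.measurable hT
  set W := e.symm ⁻¹' T with hWdef
  have hWm : MeasurableSet W := e.symm.measurable hT
  have hWI : W ⊆ Set.pi univ (fun _ : Fin 2 => Icc (-R) R) := by
    intro w hw k _
    have h1 : e.symm w ∈ Metric.closedBall (0:E2) R := hTR hw
    have h2 : |(e.symm w) k| ≤ ‖e.symm w‖ := by
      rw [EuclideanSpace.norm_eq, ← Real.sqrt_sq_eq_abs]
      apply Real.sqrt_le_sqrt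
      have := Finset.single_le_sum (f := fun i => ‖(e.symm w) i‖ ^ 2)
        (fun i _ => sq_nonneg _) (Finset.mem_univ k)
      simpa [Real.norm_eq_abs, sq_abs] using this
    have h3 : (e.symm w) k = w k := rfl
    have h4 : ‖e.symm w‖ ≤ R := by
      simpa [mem_closedBall_zero_iff] using mem_closedBall_zero_iff.1 h1
    rw [h3] at h2
    exact abs_le.1 (le_trans h2 h4)
  have hvolW : (Measure.pi fun _ : Fin 2 => (volume : Measure ℝ)) W = volume T := by
    have hmp := (EuclideanSpace.volume_preserving_symm_measurableEquiv_toLp (Fin 2)).symm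
    rw [← hmp.map_eq, Measure.map_apply e.symm.measurable hT]
    rfl
  calc (gc R * gc R) * volume T
      = Measure.pi (fun _ : Fin 2 => gc R • (volume.restrict (Icc (-R) R))) W := by
        rw [pi_gcsmul, Measure.smul_apply, Measure.restrict_apply hWm,
          Set.inter_eq_self_of_subset_left hWI, hvolW]; rfl
    _ ≤ (Measure.pi fun _ : Fin 2 => gaussianReal 0 1) W := pi_gauss_ge_pi_gcsmul R W
    _ = stdGaussian2 T := hmap.symm


def uniformSeg (a b : E2) : Measure E2 :=
  Measure.map (fun t : ℝ => a + t • (b - a)) (volume.restrict (Set.Icc (0:ℝ) 1))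

def obsLaw (a b : E2) (σ : ℝ) : Measure E2 :=
  Measure.map (fun q : E2 × E2 => q.1 + σ • q.2) ((uniformSeg a b).prod stdGaussian2)

instance restrictIcc_prob : IsProbabilityMeasure ((volume : Measure ℝ).restrict (Icc (0:ℝ) 1)) :=
  ⟨by simp⟩

lemma measurable_seg (a b : E2) : Measurable (fun t : ℝ => a + t • (b - a)) := by fun_prop

instance uniformSeg_prob (a b : E2) : IsProbabilityMeasure (uniformSeg a b) :=
  Measure.isProbabilityMeasure_map (measurable_seg a b).aemeasurable

instance stdGaussian2_prob : IsProbabilityMeasure stdGaussian2 :=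
  Measure.isProbabilityMeasure_map (MeasurableEquiv.measurable _).aemeasurable

lemma measurable_F (σ : ℝ) : Measurable (fun q : E2 × E2 => q.1 + σ • q.2) := by fun_prop

instance obsLaw_prob (a b : E2) (σ : ℝ) : IsProbabilityMeasure (obsLaw a b σ) :=
  Measure.isProbabilityMeasure_map (measurable_F σ).aemeasurable

lemma seg_dist_mid (a b : E2) {t : ℝ} (ht : t ∈ Icc (0:ℝ) 1) :
    ‖(a + t • (b - a)) - midpoint ℝ a b‖ ≤ ‖b - a‖ / 2 := by
  have h1 : (a + t • (b - a)) - midpoint ℝ a b = (t - 1/2) • (b - a) := by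
    have hmid2 : midpoint ℝ a b = (1/2 : ℝ) • (a + b) := by
      rw [midpoint_eq_smul_add, invOf_eq_inv]; norm_num
    rw [hmid2]
    module
  rw [h1, norm_smul]
  have h2 : |t - 1/2| ≤ 1/2 := by
    rw [abs_le]; constructor <;> [linarith [ht.1]; linarith [ht.2]]
  have := norm_nonneg (b - a)
  calc ‖t - 1/2‖ * ‖b - a‖ ≤ (1/2) * ‖b - a‖ := by
        apply mul_le_mul_of_nonneg_right _ this
        simpa [Real.norm_eq_abs] using h2
    _ = ‖b - a‖ / 2 := by ring

lemma obsLaw_ge (a b : E2) {σ s : ℝ} (hs : 0 < s) (hsσ : s ≤ σ) :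
    ((gc (1 + ‖b - a‖ / (2*s)) * gc (1 + ‖b - a‖ / (2*s))) * ENNReal.ofReal ((σ^2)⁻¹)) •
      volume.restrict (Metric.closedBall (midpoint ℝ a b) σ) ≤ obsLaw a b σ := by
  have hσ : 0 < σ := lt_of_lt_of_le hs hsσ
  set R : ℝ := 1 + ‖b - a‖ / (2*s) with hR
  set m : E2 := midpoint ℝ a b with hm
  set B : Set E2 := Metric.closedBall m σ with hB
  set c : ℝ≥0∞ := (gc R * gc R) * ENNReal.ofReal ((σ^2)⁻¹) with hc
  refine Measure.le_iff.2 (fun A hA => ?_)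
  have hBmeas : MeasurableSet B := Metric.isClosed_closedBall.measurableSet
  set A' : Set E2 := A ∩ B with hA'
  have hA'meas : MeasurableSet A' := hA.inter hBmeas
  have hstep1 : (c • volume.restrict B) A = c * volume A' := by
    rw [Measure.smul_apply, Measure.restrict_apply hA]; rfl
  have hstep2 : obsLaw a b σ A' ≤ obsLaw a b σ A :=
    measure_mono inter_subset_left
  rw [hstep1]
  refine le_trans ?_ hstep2
  -- now show c * volume A' ≤ obsLaw a b σ A'
  set S : Set (E2 × E2) := (fun q : E2 × E2 => q.1 + σ • q.2) ⁻¹' A' with hS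
  have hSmeas : MeasurableSet S := (measurable_F σ) hA'meas
  have hobs : obsLaw a b σ A' = ∫⁻ u, stdGaussian2 (Prod.mk u ⁻¹' S) ∂(uniformSeg a b) := by
    rw [obsLaw, Measure.map_apply (measurable_F σ) hA'meas, Measure.prod_apply hSmeas]
  have hGmeas : Measurable (fun u : E2 => stdGaussian2 (Prod.mk u ⁻¹' S)) :=
    measurable_measure_prodMk_left hSmeas
  have hmap2 : ∫⁻ u, stdGaussian2 (Prod.mk u ⁻¹' S) ∂(uniformSeg a b) =
      ∫⁻ t in Icc (0:ℝ) 1, stdGaussian2 (Prod.mk (a + t • (b - a)) ⁻¹' S) := by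
    rw [uniformSeg, lintegral_map hGmeas (measurable_seg a b)]
  have hpt : ∀ t ∈ Icc (0:ℝ) 1,
      c * volume A' ≤ stdGaussian2 (Prod.mk (a + t • (b - a)) ⁻¹' S) := by
    intro t ht
    set u : E2 := a + t • (b - a) with hu
    set T : Set E2 := Prod.mk u ⁻¹' S with hT
    have hTmeas : MeasurableSet T := by
      have : T = (fun y : E2 => u + σ • y) ⁻¹' A' := rfl
      rw [this]
      exact (by fun_prop : Measurable (fun y : E2 => u + σ • y)) hA'meas
    have hTvol : volume T = ENNReal.ofReal ((σ^2)⁻¹) * volume A' := by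
      have h1 : T = (fun y : E2 => σ • y) ⁻¹' ((fun x : E2 => u + x) ⁻¹' A') := rfl
      rw [h1, Measure.addHaar_preimage_smul volume (ne_of_gt hσ), measure_preimage_add]
      congr 1
      rw [finrank_euclideanSpace_fin]
      rw [abs_of_nonneg (by positivity)]
    have hTsub : T ⊆ Metric.closedBall 0 R := by
      intro y hy
      have h2 : u + σ • y ∈ B := (hy : u + σ • y ∈ A').2
      have h3 : ‖u + σ • y - m‖ ≤ σ := by
        simpa [dist_eq_norm] using Metric.mem_closedBall.1 h2
      have h4 : ‖u - m‖ ≤ ‖b - a‖ / 2 := seg_dist_mid a b ht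
      have h5 : ‖σ • y‖ ≤ σ + ‖b - a‖ / 2 := by
        have : σ • y = (u + σ • y - m) - (u - m) := by abel
        rw [this]
        calc ‖(u + σ • y - m) - (u - m)‖ ≤ ‖u + σ • y - m‖ + ‖u - m‖ := norm_sub_le _ _
          _ ≤ σ + ‖b - a‖ / 2 := add_le_add h3 h4
      have h6 : ‖y‖ ≤ R := by
        rw [norm_smul, Real.norm_eq_abs, abs_of_pos hσ] at h5
        have h7 : ‖y‖ ≤ 1 + ‖b - a‖ / (2*σ) := by
          rw [← le_div_iff₀' hσ] at h5
          calc ‖y‖ ≤ (σ + ‖b - a‖ / 2) / σ := h5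
            _ = 1 + ‖b - a‖ / (2*σ) := by field_simp
        refine le_trans h7 ?_
        rw [hR]
        have : ‖b - a‖ / (2*σ) ≤ ‖b - a‖ / (2*s) := by
          apply div_le_div_of_nonneg_left (norm_nonneg _) (by positivity)
          linarith
        linarith
      simpa [Metric.mem_closedBall, dist_eq_norm] using h6
    calc c * volume A' = (gc R * gc R) * (ENNReal.ofReal ((σ^2)⁻¹) * volume A') := by
          rw [hc, mul_assoc]
      _ = (gc R * gc R) * volume T := by rw [hTvol]
      _ ≤ stdGaussian2 T := stdGaussian2_ge hTmeas hTsub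
  calc c * volume A'
      = ∫⁻ _ in Icc (0:ℝ) 1, c * volume A' := by
        rw [setLIntegral_const, Real.volume_Icc]
        simp
    _ ≤ ∫⁻ t in Icc (0:ℝ) 1, stdGaussian2 (Prod.mk (a + t • (b - a)) ⁻¹' S) :=
        setLIntegral_mono (hGmeas.comp (measurable_seg a b)) hpt
    _ = obsLaw a b σ A' := by rw [hobs, hmap2]

def labelLaw : Measure (Fin 2) := (PMF.uniformOfFintype (Fin 2)).toMeasure

def GLMM (N : ℕ) (a₁ b₁ a₂ b₂ : E2) (σ : ℝ) :
    Measure ((Fin N → Fin 2) × (Fin N → E2)) :=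
  (Measure.pi fun _ : Fin N => labelLaw).bind fun z =>
    Measure.map (fun x => (z, x))
      (Measure.pi fun i => if z i = 0 then obsLaw a₁ b₁ σ else obsLaw a₂ b₂ σ)

instance labelLaw_prob : IsProbabilityMeasure labelLaw := PMF.toMeasure.isProbabilityMeasure _

lemma labelLaw_singleton (c : Fin 2) : labelLaw {c} = 2⁻¹ := by
  rw [labelLaw, PMF.toMeasure_apply_singleton _ _ (measurableSet_singleton c),
    PMF.uniformOfFintype_apply]
  norm_num

lemma GLMM_apply (N : ℕ) (a₁ b₁ a₂ b₂ : E2) (σ : ℝ)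
    {E : Set ((Fin N → Fin 2) × (Fin N → E2))} (hE : MeasurableSet E) :
    GLMM N a₁ b₁ a₂ b₂ σ E = ∑ z : Fin N → Fin 2, (2:ℝ≥0∞)⁻¹ ^ N *
      (Measure.pi fun i => if z i = 0 then obsLaw a₁ b₁ σ else obsLaw a₂ b₂ σ)
        ((fun x => (z, x)) ⁻¹' E) := by
  rw [GLMM, Measure.bind_apply hE Measurable.of_discrete.aemeasurable, lintegral_fintype]
  refine Finset.sum_congr rfl (fun z _ => ?_)
  rw [Measure.map_apply measurable_prodMk_left hE]
  rw [show ({z} : Set (Fin N → Fin 2)) = Set.pi univ (fun k => {z k}) from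
    (Set.univ_pi_singleton z).symm, Measure.pi_pi]
  simp only [labelLaw_singleton, Finset.prod_const, Finset.card_univ, Fintype.card_fin]
  rw [mul_comm]

def flipEquiv {N : ℕ} (i : Fin N) : ((Fin N → Fin 2) × Fin 2) ≃ ((Fin N → Fin 2) × Fin 2) where
  toFun p := (Function.update p.1 i p.2, p.1 i)
  invFun p := (Function.update p.1 i p.2, p.1 i)
  left_inv p := by
    obtain ⟨z, c⟩ := p
    simp [Function.update_idem]
  right_inv p := by
    obtain ⟨z, c⟩ := p
    simp [Function.update_idem]

lemma sum_update {N : ℕ} (i : Fin N) (g : (Fin N → Fin 2) → ℝ≥0∞) :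
    ∑ z : Fin N → Fin 2, ∑ c : Fin 2, g (Function.update z i c) =
      2 * ∑ z : Fin N → Fin 2, g z := by
  have h := Equiv.sum_comp (flipEquiv i) (fun p => g p.1)
  have h1 : ∑ p : (Fin N → Fin 2) × Fin 2, g ((flipEquiv i p).1) =
      ∑ z : Fin N → Fin 2, ∑ c : Fin 2, g (Function.update z i c) := by
    rw [Fintype.sum_prod_type]; rfl
  have h2 : ∑ p : (Fin N → Fin 2) × Fin 2, g p.1 = 2 * ∑ z : Fin N → Fin 2, g z := by
    rw [Fintype.sum_prod_type]
    have hx : ∀ x : Fin N → Fin 2, (∑ _c : Fin 2, g x) = 2 * g x := fun x => by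
      rw [Fin.sum_univ_two, two_mul]
    calc ∑ x : Fin N → Fin 2, ∑ _c : Fin 2, g x
        = ∑ x : Fin N → Fin 2, 2 * g x := Finset.sum_congr rfl (fun x _ => hx x)
      _ = 2 * ∑ x : Fin N → Fin 2, g x := (Finset.mul_sum _ _ _).symm
  rw [← h1, ← h2]
  exact h

lemma sum_update₂ {N : ℕ} (i j : Fin N) (g : (Fin N → Fin 2) → ℝ≥0∞) :
    ∑ z : Fin N → Fin 2, ∑ a : Fin 2, ∑ b : Fin 2,
        g (Function.update (Function.update z i a) j b) =
      4 * ∑ z : Fin N → Fin 2, g z := by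
  calc ∑ z : Fin N → Fin 2, ∑ a : Fin 2, ∑ b : Fin 2,
        g (Function.update (Function.update z i a) j b)
      = ∑ z : Fin N → Fin 2, ∑ a : Fin 2,
          (fun w => ∑ b : Fin 2, g (Function.update w j b)) (Function.update z i a) := rfl
    _ = 2 * ∑ z : Fin N → Fin 2,
          (fun w => ∑ b : Fin 2, g (Function.update w j b)) z :=
        sum_update i (fun w => ∑ b : Fin 2, g (Function.update w j b))
    _ = 2 * (2 * ∑ z : Fin N → Fin 2, g z) := by rw [← sum_update j g]
    _ = 4 * ∑ z : Fin N → Fin 2, g z := by ring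

lemma partition_measure {X : Type*} [MeasurableSpace X] (μ : Measure X)
    (f g : X → Fin 2) (hf : Measurable f) (hg : Measurable g) :
    ∑ c : Fin 2 × Fin 2, μ {x | f x ≠ c.1 ∧ g x = c.2} = μ univ := by
  have hmeas : ∀ c : Fin 2 × Fin 2, MeasurableSet {x | f x ≠ c.1 ∧ g x = c.2} := by
    intro c
    have : {x | f x ≠ c.1 ∧ g x = c.2} = f ⁻¹' {c.1}ᶜ ∩ g ⁻¹' {c.2} := by
      ext x
      simp only [Set.mem_setOf_eq, Set.mem_inter_iff, Set.mem_preimage, Set.mem_compl_iff,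
        Set.mem_singleton_iff]
    rw [this]
    exact (hf (measurableSet_singleton c.1).compl).inter (hg (measurableSet_singleton c.2))
  have hdisj : Set.PairwiseDisjoint (↑(Finset.univ : Finset (Fin 2 × Fin 2)))
      (fun c : Fin 2 × Fin 2 => {x | f x ≠ c.1 ∧ g x = c.2}) := by
    intro c _ c' _ hcc'
    refine Set.disjoint_left.2 (fun x hx hx' => ?_)
    apply hcc'
    have hfin : ∀ u a a' : Fin 2, u ≠ a → u ≠ a' → a = a' := by decide
    have h1 : c.1 = c'.1 := hfin (f x) c.1 c'.1 hx.1 hx'.1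
    have h2 : c.2 = c'.2 := hx.2.symm.trans hx'.2
    exact Prod.ext h1 h2
  have hcover : (⋃ c ∈ (Finset.univ : Finset (Fin 2 × Fin 2)),
      {x | f x ≠ c.1 ∧ g x = c.2}) = univ := by
    ext x
    simp only [Set.mem_iUnion, Set.mem_univ, iff_true, Finset.mem_univ, exists_true_left,
      exists_prop, true_and]
    have : ∀ u : Fin 2, ∃ a : Fin 2, u ≠ a := by decide
    obtain ⟨a, ha⟩ := this (f x)
    exact ⟨(a, g x), ha, rfl⟩
  rw [← hcover, measure_biUnion_finset hdisj (fun c _ => hmeas c)]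

def hamStar {N : ℕ} (zhat z : Fin N → Fin 2) : ℕ :=
  min ((Finset.univ.filter fun i => zhat i ≠ z i).card)
      ((Finset.univ.filter fun i => zhat i ≠ Equiv.swap 0 1 (z i)).card)

/-- almost exact recovery is impossible when liminf σ_N > 0. -/
theorem almost_exact_recovery_impossible
    (a₁ b₁ a₂ b₂ : E2)
    (hlen : ‖b₁ - a₁‖ = ‖b₂ - a₂‖) (hpos : 0 < ‖b₁ - a₁‖)
    (hmid : midpoint ℝ a₁ b₁ = midpoint ℝ a₂ b₂)
    (hdist : segment ℝ a₁ b₁ ≠ segment ℝ a₂ b₂)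
    (σ : ℕ → ℝ) (hσpos : ∀ N, 0 < σ N)
    (hσ : 0 < Filter.liminf σ atTop) :
    ∀ zhat : (N : ℕ) → (Fin N → E2) → (Fin N → Fin 2),
      (∀ N, Measurable (zhat N)) →
      ∃ ε : ℝ, 0 < ε ∧
        ¬ Tendsto
          (fun N : ℕ => GLMM N a₁ b₁ a₂ b₂ (σ N)
            {p | ε ≤ (hamStar (zhat N p.2) p.1 : ℝ) / N})
          atTop (nhds 0) := by
  intro zhat hzhat
  have hbdd : Filter.IsBoundedUnder (· ≥ ·) atTop σ :=
    ⟨0, Filter.eventually_map.2 (Filter.Eventually.of_forall (fun N => (hσpos N).le))⟩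
  set s : ℝ := Filter.liminf σ atTop / 2 with hsdef
  have hs : 0 < s := half_pos hσ
  have hev : ∀ᶠ N in atTop, s ≤ σ N :=
    (Filter.eventually_lt_of_lt_liminf (half_lt_self hσ) hbdd).mono (fun N h => h.le)
  set R : ℝ := 1 + ‖b₁ - a₁‖ / (2 * s) with hRdef
  set V : ℝ≥0∞ := volume (Metric.ball (0 : E2) 1) with hVdef
  have hV0 : V ≠ 0 := (Metric.measure_ball_pos _ _ one_pos).ne'
  have hVfin : V ≠ ∞ := measure_ball_lt_top.ne
  set α : ℝ≥0∞ := gc R * gc R * V with hαdef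
  have hα0 : α ≠ 0 := mul_ne_zero (mul_ne_zero (gc_pos R).ne' (gc_pos R).ne') hV0
  have hαfin : α ≠ ∞ :=
    ENNReal.mul_ne_top (ENNReal.mul_ne_top ENNReal.ofReal_ne_top ENNReal.ofReal_ne_top) hVfin
  set ε' : ℝ≥0∞ := α * α / 2 / 8 with hε'def
  have hαα0 : α * α ≠ 0 := mul_ne_zero hα0 hα0
  have hααfin : α * α ≠ ∞ := ENNReal.mul_ne_top hαfin hαfin
  have hhalf0 : α * α / 2 ≠ 0 := by
    rw [Ne, ENNReal.div_eq_zero_iff]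
    simp [hαα0]
  have hhalffin : α * α / 2 ≠ ∞ :=
    (ENNReal.div_lt_top hααfin (by norm_num)).ne
  have hε'0 : ε' ≠ 0 := by
    rw [hε'def, Ne, ENNReal.div_eq_zero_iff]
    simp [hhalf0]
  have hε'fin : ε' ≠ ∞ := (ENNReal.div_lt_top hhalffin (by norm_num)).ne
  have h8ε' : 8 * ε' = α * α / 2 := by
    rw [hε'def, mul_comm, ENNReal.div_mul_cancel (by norm_num) (by norm_num)]
  refine ⟨ε'.toReal, ENNReal.toReal_pos hε'0 hε'fin, ?_⟩
  intro htend
  -- the key uniform estimate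
  have key : ∀ N : ℕ, 2 ≤ N → s ≤ σ N →
      ε' ≤ GLMM N a₁ b₁ a₂ b₂ (σ N)
        {p | ε'.toReal ≤ (hamStar (zhat N p.2) p.1 : ℝ) / N} := by
    intro N hN2 hsσ
    have hσN : 0 < σ N := hσpos N
    set ν : Fin 2 → Measure E2 :=
      fun c => if c = 0 then obsLaw a₁ b₁ (σ N) else obsLaw a₂ b₂ (σ N) with hνdef
    haveI hνprob : ∀ c, IsProbabilityMeasure (ν c) := by
      intro c
      rw [hνdef]
      dsimp only
      split_ifs <;> infer_instance
    set m : E2 := midpoint ℝ a₁ b₁ with hmdef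
    set κ : Measure E2 :=
      ((gc R * gc R) * ENNReal.ofReal ((σ N ^ 2)⁻¹)) •
        volume.restrict (Metric.closedBall m (σ N)) with hκdef
    have hκle : ∀ c, κ ≤ ν c := by
      intro c
      rw [hνdef]
      dsimp only
      split_ifs
      · exact obsLaw_ge a₁ b₁ hs hsσ
      · have h2 := obsLaw_ge a₂ b₂ hs hsσ
        rw [← hlen, ← hmid] at h2
        exact h2
    haveI hκfin : IsFiniteMeasure κ := isFiniteMeasure_of_le (ν 0) (hκle 0)
    have hκuniv : κ univ = α := by
      rw [hκdef, Measure.smul_apply, Measure.restrict_apply MeasurableSet.univ, Set.univ_inter,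
        Measure.addHaar_closedBall _ _ hσN.le, finrank_euclideanSpace_fin, smul_eq_mul, hαdef]
      rw [mul_assoc, ← mul_assoc (ENNReal.ofReal ((σ N ^ 2)⁻¹)),
        ← ENNReal.ofReal_mul (by positivity), inv_mul_cancel₀ (by positivity),
        ENNReal.ofReal_one, one_mul, hVdef, mul_assoc]
    have hpair : Measurable
        (fun p : (Fin N → Fin 2) × (Fin N → E2) => (zhat N p.2, p.1)) :=
      ((hzhat N).comp measurable_snd).prodMk measurable_fst
    set Eset : Fin N → Fin N → Set ((Fin N → Fin 2) × (Fin N → E2)) :=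
      fun i j => {p | zhat N p.2 i ≠ p.1 i ∧ zhat N p.2 j = p.1 j} with hEsetdef
    have hEmeas : ∀ i j, MeasurableSet (Eset i j) := by
      intro i j
      exact hpair (MeasurableSet.of_discrete
        (s := {q : (Fin N → Fin 2) × (Fin N → Fin 2) | q.1 i ≠ q.2 i ∧ q.1 j = q.2 j}))
    -- per-pair estimate
    have hpair_est : ∀ i j : Fin N, i ≠ j →
        α * α ≤ 4 * GLMM N a₁ b₁ a₂ b₂ (σ N) (Eset i j) := by
      intro i j hij
      classical
      set fam : (Fin N → Fin 2) → Fin N → Measure E2 :=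
        fun z k => if k = i ∨ k = j then κ else ν (z k) with hfamdef
      set mz : (Fin N → Fin 2) → Measure (Fin N → E2) :=
        fun z => Measure.pi (fam z) with hmzdef
      haveI hfamfin : ∀ z k, IsFiniteMeasure (fam z k) := by
        intro z k
        rw [hfamdef]
        dsimp only
        split_ifs <;> infer_instance
      have hmz_le : ∀ z, mz z ≤ Measure.pi (fun k => ν (z k)) := by
        intro z
        have hfun : fam z =
            Function.update (Function.update (fun k => ν (z k)) i κ) j κ := by
          funext k
          rw [hfamdef]
          dsimp only
          by_cases hkj : k = j
          · subst hkj
            simp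
          · rw [Function.update_of_ne hkj]
            by_cases hki : k = i
            · subst hki
              simp
            · rw [Function.update_of_ne hki, if_neg (by tauto)]
        haveI : ∀ k, IsFiniteMeasure ((Function.update (fun k => ν (z k)) i κ) k) := by
          intro k
          by_cases hk : k = i
          · subst hk; rw [Function.update_self]; infer_instance
          · rw [Function.update_of_ne hk]; infer_instance
        rw [hmzdef]
        dsimp only
        rw [hfun]
        refine le_trans
          (pi_update_le (Function.update (fun k => ν (z k)) i κ) j κ ?_)
          (pi_update_le (fun k => ν (z k)) i κ ?_)
        · rw [Function.update_of_ne (Ne.symm hij)]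
          exact hκle _
        · exact hκle _
      have hmz_shift : ∀ z a b,
          mz (Function.update (Function.update z i a) j b) = mz z := by
        intro z a b
        rw [hmzdef]
        dsimp only
        congr 1
        funext k
        rw [hfamdef]
        dsimp only
        by_cases hk : k = i ∨ k = j
        · rw [if_pos hk, if_pos hk]
        · push_neg at hk
          rw [if_neg (by tauto), if_neg (by tauto)]
          rw [Function.update_of_ne hk.2, Function.update_of_ne hk.1]
      have hmz_univ : ∀ z, mz z univ = α * α := by
        intro z
        rw [hmzdef]
        dsimp only
        rw [Measure.pi_univ]
        have hval : ∀ k, fam z k univ = if k ∈ ({i, j} : Finset (Fin N)) then α else 1 := by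
          intro k
          rw [hfamdef]
          dsimp only
          by_cases hk : k = i ∨ k = j
          · rw [if_pos hk, if_pos (by simpa [Finset.mem_insert, Finset.mem_singleton] using hk)]
            exact hκuniv
          · rw [if_neg hk, if_neg (by simpa [Finset.mem_insert, Finset.mem_singleton] using hk)]
            exact measure_univ
        rw [Finset.prod_congr rfl (fun k _ => hval k)]
        rw [Finset.prod_ite_mem Finset.univ ({i, j} : Finset (Fin N)) (fun _ => α)]
        rw [Finset.univ_inter, Finset.prod_const,
          Finset.card_insert_of_notMem (by simp [hij]), Finset.card_singleton]
        rw [sq]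
      set X : (Fin N → Fin 2) → Set (Fin N → E2) :=
        fun z => {x | zhat N x i ≠ z i ∧ zhat N x j = z j} with hXdef
      have hXab : ∀ (z : Fin N → Fin 2) (a b : Fin 2),
          X (Function.update (Function.update z i a) j b) =
            {x | zhat N x i ≠ a ∧ zhat N x j = b} := by
        intro z a b
        rw [hXdef]
        dsimp only
        rw [Function.update_of_ne hij, Function.update_self, Function.update_self]
      have hpartition : ∀ z : Fin N → Fin 2,
          ∑ a : Fin 2, ∑ b : Fin 2, (mz z) {x | zhat N x i ≠ a ∧ zhat N x j = b} = α * α := by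
        intro z
        have hp := partition_measure (mz z) (fun x => zhat N x i) (fun x => zhat N x j)
          ((measurable_pi_apply i).comp (hzhat N)) ((measurable_pi_apply j).comp (hzhat N))
        rw [hmz_univ z] at hp
        rw [← hp, Fintype.sum_prod_type]
      have hsum : 4 * ∑ z : Fin N → Fin 2, (mz z) (X z) = (2:ℝ≥0∞) ^ N * (α * α) := by
        rw [← sum_update₂ i j (fun z => (mz z) (X z))]
        have hterm : ∀ (z : Fin N → Fin 2),
            (∑ a : Fin 2, ∑ b : Fin 2,
              (mz (Function.update (Function.update z i a) j b))
                (X (Function.update (Function.update z i a) j b))) = α * α := by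
          intro z
          calc (∑ a : Fin 2, ∑ b : Fin 2,
              (mz (Function.update (Function.update z i a) j b))
                (X (Function.update (Function.update z i a) j b)))
              = ∑ a : Fin 2, ∑ b : Fin 2, (mz z) {x | zhat N x i ≠ a ∧ zhat N x j = b} := by
                refine Finset.sum_congr rfl (fun a _ => Finset.sum_congr rfl (fun b _ => ?_))
                rw [hmz_shift, hXab]
            _ = α * α := hpartition z
        rw [Finset.sum_congr rfl (fun z _ => hterm z), Finset.sum_const, Finset.card_univ,
          Fintype.card_fun, Fintype.card_fin, Fintype.card_fin, nsmul_eq_mul, Nat.cast_pow,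
          Nat.cast_ofNat]
      have hGLMM : GLMM N a₁ b₁ a₂ b₂ (σ N) (Eset i j) =
          ∑ z : Fin N → Fin 2, (2:ℝ≥0∞)⁻¹ ^ N * (Measure.pi fun k => ν (z k)) (X z) := by
        rw [GLMM_apply _ _ _ _ _ _ (hEmeas i j)]
        rfl
      have h2N : (2:ℝ≥0∞)⁻¹ ^ N * (2:ℝ≥0∞) ^ N = 1 := by
        rw [← mul_pow, ENNReal.inv_mul_cancel (by norm_num) (by norm_num), one_pow]
      calc α * α = ((2:ℝ≥0∞)⁻¹ ^ N * (2:ℝ≥0∞) ^ N) * (α * α) := by rw [h2N, one_mul]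
        _ = (2:ℝ≥0∞)⁻¹ ^ N * ((2:ℝ≥0∞) ^ N * (α * α)) := by ring
        _ = (2:ℝ≥0∞)⁻¹ ^ N * (4 * ∑ z : Fin N → Fin 2, (mz z) (X z)) := by rw [hsum]
        _ = 4 * ((2:ℝ≥0∞)⁻¹ ^ N * ∑ z : Fin N → Fin 2, (mz z) (X z)) := mul_left_comm _ _ _
        _ = 4 * ∑ z : Fin N → Fin 2, (2:ℝ≥0∞)⁻¹ ^ N * (mz z) (X z) := by
            rw [Finset.mul_sum]
        _ ≤ 4 * ∑ z : Fin N → Fin 2, (2:ℝ≥0∞)⁻¹ ^ N * (Measure.pi fun k => ν (z k)) (X z) := by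
            gcongr with z hz
            exact hmz_le z
        _ = 4 * GLMM N a₁ b₁ a₂ b₂ (σ N) (Eset i j) := by rw [hGLMM]
    -- the event of interest
    set S : Set ((Fin N → Fin 2) × (Fin N → E2)) :=
      {p | ε'.toReal ≤ (hamStar (zhat N p.2) p.1 : ℝ) / N} with hSdef
    have hSmeas : MeasurableSet S :=
      hpair (MeasurableSet.of_discrete
        (s := {q : (Fin N → Fin 2) × (Fin N → Fin 2) | ε'.toReal ≤ (hamStar q.1 q.2 : ℝ) / N}))
    haveI hGLMMprob : IsProbabilityMeasure (GLMM N a₁ b₁ a₂ b₂ (σ N)) := by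
      constructor
      rw [GLMM_apply _ _ _ _ _ _ MeasurableSet.univ]
      have h1 : ∀ z : Fin N → Fin 2,
          (2:ℝ≥0∞)⁻¹ ^ N * (Measure.pi fun i => if z i = 0 then obsLaw a₁ b₁ (σ N)
            else obsLaw a₂ b₂ (σ N)) ((fun x => (z, x)) ⁻¹' univ) = (2:ℝ≥0∞)⁻¹ ^ N := by
        intro z
        haveI : ∀ i : Fin N, IsProbabilityMeasure
            (if z i = 0 then obsLaw a₁ b₁ (σ N) else obsLaw a₂ b₂ (σ N)) := by
          intro i; split_ifs <;> infer_instance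
        rw [Set.preimage_univ, measure_univ, mul_one]
      rw [Finset.sum_congr rfl (fun z _ => h1 z), Finset.sum_const, Finset.card_univ,
        Fintype.card_fun, Fintype.card_fin, Fintype.card_fin, nsmul_eq_mul, Nat.cast_pow,
        Nat.cast_ofNat, ← mul_pow, ENNReal.mul_inv_cancel (by norm_num) (by norm_num), one_pow]
    set Dc : ((Fin N → Fin 2) × (Fin N → E2)) → ℕ :=
      fun p => (Finset.univ.filter fun i => zhat N p.2 i ≠ p.1 i).card with hDcdef
    set Ec : ((Fin N → Fin 2) × (Fin N → E2)) → ℕ :=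
      fun p => (Finset.univ.filter fun i => zhat N p.2 i = p.1 i).card with hEcdef
    have hDle : ∀ p, Dc p ≤ N := fun p =>
      le_trans (Finset.card_filter_le _ _) (by simp)
    have hEle : ∀ p, Ec p ≤ N := fun p =>
      le_trans (Finset.card_filter_le _ _) (by simp)
    have hham : ∀ p : (Fin N → Fin 2) × (Fin N → E2),
        hamStar (zhat N p.2) p.1 = min (Dc p) (Ec p) := by
      intro p
      rw [hamStar, hDcdef, hEcdef]
      dsimp only
      congr 2
      refine Finset.filter_congr (fun u _ => ?_)
      have hsw : ∀ v w : Fin 2, (v ≠ Equiv.swap 0 1 w) ↔ v = w := by decide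
      simp [hsw]
    have hgle : ∀ p, Dc p * Ec p ≤ hamStar (zhat N p.2) p.1 * N := by
      intro p
      rw [hham]
      rcases le_total (Dc p) (Ec p) with h | h
      · rw [min_eq_left h]
        exact Nat.mul_le_mul_left _ (hEle p)
      · rw [min_eq_right h]
        calc Dc p * Ec p ≤ N * Ec p := Nat.mul_le_mul_right _ (hDle p)
          _ = Ec p * N := Nat.mul_comm _ _
    have hNpos : (0:ℝ) < N := by
      have h2 : (2:ℝ) ≤ N := by exact_mod_cast hN2
      linarith
    have hbound : ∀ p, ((Dc p * Ec p : ℕ) : ℝ≥0∞) ≤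
        ε' * (N:ℝ≥0∞) ^ 2 + (N:ℝ≥0∞) ^ 2 * S.indicator (fun _ => (1:ℝ≥0∞)) p := by
      intro p
      by_cases hp : p ∈ S
      · rw [Set.indicator_of_mem hp, mul_one]
        calc ((Dc p * Ec p : ℕ) : ℝ≥0∞) ≤ ((N * N : ℕ) : ℝ≥0∞) :=
              Nat.cast_le.2 (Nat.mul_le_mul (hDle p) (hEle p))
          _ = (N:ℝ≥0∞) ^ 2 := by push_cast; ring
          _ ≤ ε' * (N:ℝ≥0∞) ^ 2 + (N:ℝ≥0∞) ^ 2 := le_add_self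
      · rw [Set.indicator_of_notMem hp, mul_zero, add_zero]
        have hp' : (hamStar (zhat N p.2) p.1 : ℝ) / N < ε'.toReal := not_le.1 hp
        have h2 : (hamStar (zhat N p.2) p.1 : ℝ) < ε'.toReal * N := (div_lt_iff₀ hNpos).1 hp'
        have h3 : ((Dc p * Ec p : ℕ) : ℝ) ≤ (hamStar (zhat N p.2) p.1 : ℝ) * N := by
          exact_mod_cast hgle p
        have h4 : ((Dc p * Ec p : ℕ) : ℝ) ≤ ε'.toReal * N * N := by nlinarith
        calc ((Dc p * Ec p : ℕ) : ℝ≥0∞) = ENNReal.ofReal ((Dc p * Ec p : ℕ) : ℝ) := by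
              rw [ENNReal.ofReal_natCast]
          _ ≤ ENNReal.ofReal (ε'.toReal * N * N) := ENNReal.ofReal_le_ofReal h4
          _ = ε' * (N:ℝ≥0∞) ^ 2 := by
              rw [ENNReal.ofReal_mul (by positivity), ENNReal.ofReal_mul ENNReal.toReal_nonneg,
                ENNReal.ofReal_toReal hε'fin, ENNReal.ofReal_natCast, sq, mul_assoc]
          _ ≤ ε' * (N:ℝ≥0∞) ^ 2 := le_rfl
    have hindmeas : ∀ i j : Fin N, Measurable ((Eset i j).indicator (fun _ => (1:ℝ≥0∞))) :=
      fun i j => measurable_const.indicator (hEmeas i j)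
    have hpt2 : ∀ p, ((Dc p * Ec p : ℕ) : ℝ≥0∞) =
        ∑ i : Fin N, ∑ j : Fin N, (Eset i j).indicator (fun _ => (1:ℝ≥0∞)) p := by
      intro p
      have hD : ((Dc p : ℕ) : ℝ≥0∞) =
          ∑ i : Fin N, (if zhat N p.2 i ≠ p.1 i then (1:ℝ≥0∞) else 0) := by
        rw [hDcdef]
        dsimp only
        rw [Finset.card_filter]
        push_cast
        exact Finset.sum_congr rfl (fun u _ => by split_ifs <;> simp)
      have hE : ((Ec p : ℕ) : ℝ≥0∞) =
          ∑ j : Fin N, (if zhat N p.2 j = p.1 j then (1:ℝ≥0∞) else 0) := by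
        rw [hEcdef]
        dsimp only
        rw [Finset.card_filter]
        push_cast
        exact Finset.sum_congr rfl (fun u _ => by split_ifs <;> simp)
      rw [Nat.cast_mul, hD, hE, Finset.sum_mul_sum]
      refine Finset.sum_congr rfl (fun i _ => Finset.sum_congr rfl (fun j _ => ?_))
      rw [Set.indicator_apply]
      by_cases h1 : zhat N p.2 i ≠ p.1 i <;> by_cases h2 : zhat N p.2 j = p.1 j <;>
        simp [hEsetdef, h1, h2, Set.mem_setOf_eq]
    have hInt : ∫⁻ p, ((Dc p * Ec p : ℕ) : ℝ≥0∞) ∂(GLMM N a₁ b₁ a₂ b₂ (σ N)) =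
        ∑ i : Fin N, ∑ j : Fin N, GLMM N a₁ b₁ a₂ b₂ (σ N) (Eset i j) := by
      calc ∫⁻ p, ((Dc p * Ec p : ℕ) : ℝ≥0∞) ∂(GLMM N a₁ b₁ a₂ b₂ (σ N))
          = ∫⁻ p, ∑ i : Fin N, ∑ j : Fin N,
              (Eset i j).indicator (fun _ => (1:ℝ≥0∞)) p ∂(GLMM N a₁ b₁ a₂ b₂ (σ N)) :=
            lintegral_congr (fun p => hpt2 p)
        _ = ∑ i : Fin N, ∫⁻ p, ∑ j : Fin N,
              (Eset i j).indicator (fun _ => (1:ℝ≥0∞)) p ∂(GLMM N a₁ b₁ a₂ b₂ (σ N)) :=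
            lintegral_finset_sum _ (fun i _ => Finset.measurable_sum _ (fun j _ => hindmeas i j))
        _ = ∑ i : Fin N, ∑ j : Fin N, GLMM N a₁ b₁ a₂ b₂ (σ N) (Eset i j) := by
            refine Finset.sum_congr rfl (fun i _ => ?_)
            rw [lintegral_finset_sum _ (fun j _ => hindmeas i j)]
            refine Finset.sum_congr rfl (fun j _ => ?_)
            rw [lintegral_indicator_const (hEmeas i j) 1, one_mul]
    have hlow : ((N * (N - 1) : ℕ) : ℝ≥0∞) * (α * α) ≤
        4 * ∫⁻ p, ((Dc p * Ec p : ℕ) : ℝ≥0∞) ∂(GLMM N a₁ b₁ a₂ b₂ (σ N)) := by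
      rw [hInt]
      have hcard : (Finset.univ.offDiag : Finset (Fin N × Fin N)).card = N * (N - 1) := by
        rw [Finset.offDiag_card, Finset.card_univ, Fintype.card_fin, Nat.mul_sub, Nat.mul_one]
      calc ((N * (N - 1) : ℕ) : ℝ≥0∞) * (α * α)
          = ∑ _q ∈ (Finset.univ.offDiag : Finset (Fin N × Fin N)), (α * α) := by
            rw [Finset.sum_const, hcard, nsmul_eq_mul]
        _ ≤ ∑ q ∈ (Finset.univ.offDiag : Finset (Fin N × Fin N)),
              4 * GLMM N a₁ b₁ a₂ b₂ (σ N) (Eset q.1 q.2) :=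
            Finset.sum_le_sum (fun q hq => hpair_est q.1 q.2 (Finset.mem_offDiag.1 hq).2.2)
        _ ≤ ∑ q ∈ (Finset.univ ×ˢ Finset.univ : Finset (Fin N × Fin N)),
              4 * GLMM N a₁ b₁ a₂ b₂ (σ N) (Eset q.1 q.2) := by
            refine Finset.sum_le_sum_of_subset (fun q hq => ?_)
            simp [Finset.mem_product]
        _ = 4 * ∑ i : Fin N, ∑ j : Fin N, GLMM N a₁ b₁ a₂ b₂ (σ N) (Eset i j) := by
            rw [← Finset.mul_sum]
            congr 1
            rw [Finset.sum_product]
    have hup : ∫⁻ p, ((Dc p * Ec p : ℕ) : ℝ≥0∞) ∂(GLMM N a₁ b₁ a₂ b₂ (σ N)) ≤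
        ε' * (N:ℝ≥0∞) ^ 2 + (N:ℝ≥0∞) ^ 2 * GLMM N a₁ b₁ a₂ b₂ (σ N) S := by
      calc ∫⁻ p, ((Dc p * Ec p : ℕ) : ℝ≥0∞) ∂(GLMM N a₁ b₁ a₂ b₂ (σ N))
          ≤ ∫⁻ p, (ε' * (N:ℝ≥0∞) ^ 2 + (N:ℝ≥0∞) ^ 2 * S.indicator (fun _ => (1:ℝ≥0∞)) p)
              ∂(GLMM N a₁ b₁ a₂ b₂ (σ N)) := lintegral_mono hbound
        _ = ε' * (N:ℝ≥0∞) ^ 2 + (N:ℝ≥0∞) ^ 2 * GLMM N a₁ b₁ a₂ b₂ (σ N) S := by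
            rw [lintegral_add_left measurable_const, lintegral_const, measure_univ, mul_one,
              lintegral_const_mul _ (measurable_const.indicator hSmeas),
              lintegral_indicator_const hSmeas 1, one_mul]
    -- final arithmetic
    set P : ℝ≥0∞ := GLMM N a₁ b₁ a₂ b₂ (σ N) S with hPdef
    by_contra hcon
    push_neg at hcon
    have hNne0 : ((N:ℝ≥0∞)) ≠ 0 := Nat.cast_ne_zero.2 (by omega)
    have hNnetop : ((N:ℝ≥0∞)) ≠ ∞ := ENNReal.natCast_ne_top N
    have hN2sq0 : ((N:ℝ≥0∞)) ^ 2 ≠ 0 := pow_ne_zero _ hNne0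
    have hN2sqtop : ((N:ℝ≥0∞)) ^ 2 ≠ ∞ := ENNReal.pow_ne_top hNnetop
    have hmain : ((N:ℝ≥0∞)) ^ 2 * (α * α) ≤
        (α * α / 2) * (N:ℝ≥0∞) ^ 2 + 8 * ((N:ℝ≥0∞) ^ 2 * P) := by
      have hNN : (N * N : ℕ) ≤ 2 * (N * (N - 1)) := by
        have h1 : N ≤ 2 * (N - 1) := by omega
        calc N * N ≤ N * (2 * (N - 1)) := Nat.mul_le_mul_left N h1
          _ = 2 * (N * (N - 1)) := by ring
      calc ((N:ℝ≥0∞)) ^ 2 * (α * α)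
          = ((N * N : ℕ) : ℝ≥0∞) * (α * α) := by push_cast; ring
        _ ≤ ((2 * (N * (N - 1)) : ℕ) : ℝ≥0∞) * (α * α) := by
            gcongr <;> exact_mod_cast hNN
        _ = 2 * (((N * (N - 1) : ℕ) : ℝ≥0∞) * (α * α)) := by push_cast; ring
        _ ≤ 2 * (4 * ∫⁻ p, ((Dc p * Ec p : ℕ) : ℝ≥0∞) ∂(GLMM N a₁ b₁ a₂ b₂ (σ N))) := by
            gcongr
        _ = 8 * ∫⁻ p, ((Dc p * Ec p : ℕ) : ℝ≥0∞) ∂(GLMM N a₁ b₁ a₂ b₂ (σ N)) := by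
            rw [← mul_assoc]
            norm_num
        _ ≤ 8 * (ε' * (N:ℝ≥0∞) ^ 2 + (N:ℝ≥0∞) ^ 2 * P) := by
            gcongr
        _ = (8 * ε') * (N:ℝ≥0∞) ^ 2 + 8 * ((N:ℝ≥0∞) ^ 2 * P) := by ring
        _ = (α * α / 2) * (N:ℝ≥0∞) ^ 2 + 8 * ((N:ℝ≥0∞) ^ 2 * P) := by rw [h8ε']
    have hstrict : 8 * ((N:ℝ≥0∞) ^ 2 * P) < 8 * ((N:ℝ≥0∞) ^ 2 * ε') := by
      rw [ENNReal.mul_lt_mul_iff_right (by norm_num) (by norm_num),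
        ENNReal.mul_lt_mul_iff_right hN2sq0 hN2sqtop]
      exact hcon
    have h8 : 8 * ((N:ℝ≥0∞) ^ 2 * ε') = (α * α / 2) * (N:ℝ≥0∞) ^ 2 := by
      calc 8 * ((N:ℝ≥0∞) ^ 2 * ε') = (8 * ε') * (N:ℝ≥0∞) ^ 2 := by ring
        _ = (α * α / 2) * (N:ℝ≥0∞) ^ 2 := by rw [h8ε']
    have hcontr : ((N:ℝ≥0∞)) ^ 2 * (α * α) < ((N:ℝ≥0∞)) ^ 2 * (α * α) := by
      calc ((N:ℝ≥0∞)) ^ 2 * (α * α)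
          ≤ (α * α / 2) * (N:ℝ≥0∞) ^ 2 + 8 * ((N:ℝ≥0∞) ^ 2 * P) := hmain
        _ < (α * α / 2) * (N:ℝ≥0∞) ^ 2 + 8 * ((N:ℝ≥0∞) ^ 2 * ε') :=
            ENNReal.add_lt_add_left (ENNReal.mul_ne_top hhalffin hN2sqtop) hstrict
        _ = (α * α / 2) * (N:ℝ≥0∞) ^ 2 + (α * α / 2) * (N:ℝ≥0∞) ^ 2 := by rw [h8]
        _ = ((N:ℝ≥0∞)) ^ 2 * (α * α) := by
            rw [← add_mul, ENNReal.add_halves, mul_comm]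
    exact lt_irrefl _ hcontr
  -- conclude: contradiction with convergence to 0
  have hlarge : ∀ᶠ N in atTop, ε' ≤ GLMM N a₁ b₁ a₂ b₂ (σ N)
      {p | ε'.toReal ≤ (hamStar (zhat N p.2) p.1 : ℝ) / N} := by
    filter_upwards [hev, Filter.eventually_ge_atTop 2] with N h h2
    exact key N h2 h
  have hsmall : ∀ᶠ N in atTop, GLMM N a₁ b₁ a₂ b₂ (σ N)
      {p | ε'.toReal ≤ (hamStar (zhat N p.2) p.1 : ℝ) / N} < ε' :=
    htend.eventually (gt_mem_nhds (zero_lt_iff.2 hε'0))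
  obtain ⟨N, hN1, hN2'⟩ := (hlarge.and hsmall).exists
  exact absurd hN1 (not_le.2 hN2')
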